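/- arXiv:1507.05301 — 3 statements merged into one kernel-verified Lean document; each statement's English description precedes it below -/
import Mathlib

section
/- Down-flow concentration at the entrance state: for every m with 0 ≤ m < M, the row vector π^{m+1} D^{m+1} equals π^m Ũ^m; equivalently, (π^{m+1} D^{m+1})_j = 0 for every j ≠ 0 and (π^{m+1} D^{m+1})_0 = Σ_{i,k} π^m(i) U^m(i,k). -/
open Matrix

theorem stmt_1
    (M l : ℕ) (hM : 1 ≤ M)
    (Q : Matrix (Fin (M+1) × Fin (l+1)) (Fin (M+1) × Fin (l+1)) ℝ)
    (htri : ∀ (m n : Fin (M+1)) (i j : Fin (l+1)),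
      1 < |(m.val : ℤ) - (n.val : ℤ)| → Q (m, i) (n, j) = 0)
    (hrow : ∀ s, ∑ t, Q s t = 0)
    (W U D : ℕ → Matrix (Fin (l+1)) (Fin (l+1)) ℝ)
    (hW : ∀ (m : ℕ) (hm : m ≤ M) (i j : Fin (l+1)),
      W m i j = Q (⟨m, by omega⟩, i) (⟨m, by omega⟩, j))
    (hU : ∀ (m : ℕ) (hm : m < M) (i j : Fin (l+1)),
      U m i j = Q (⟨m, by omega⟩, i) (⟨m+1, by omega⟩, j))
    (hD : ∀ (m : ℕ) (hm1 : 1 ≤ m) (hm2 : m ≤ M) (i j : Fin (l+1)),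
      D m i j = Q (⟨m, by omega⟩, i) (⟨m-1, by omega⟩, j))
    (hDES : ∀ (m : ℕ), 1 ≤ m → m ≤ M → ∀ (i j : Fin (l+1)), j ≠ 0 → D m i j = 0)
    (Ut : ℕ → Matrix (Fin (l+1)) (Fin (l+1)) ℝ)
    (hUt : ∀ (m : ℕ), m < M → ∀ (i j : Fin (l+1)),
      Ut m i j = if j = 0 then ∑ k, U m i k else 0)
    (hUtM : Ut M = 0)
    (B : ℕ → Matrix (Fin (l+1)) (Fin (l+1)) ℝ)
    (hB : ∀ (m : ℕ), m ≤ M → B m = W m + Ut m)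
    (π : Fin (M+1) × Fin (l+1) → ℝ)
    (hπ : Matrix.vecMul π Q = 0) :
    ∀ (m : ℕ) (hm : m < M),
      Matrix.vecMul (fun i => π (⟨m+1, by omega⟩, i)) (D (m+1))
        = Matrix.vecMul (fun i => π (⟨m, by omega⟩, i)) (Ut m) := by
  classical
  intro m hm
  have htri' : ∀ (n n' : Fin (M+1)), (n.val + 1 < n'.val ∨ n'.val + 1 < n.val) →
      ∀ (i j : Fin (l+1)), Q (n, i) (n', j) = 0 := by
    intro n n' h i j
    apply htri
    rw [lt_abs]
    rcases h with h | h
    · right; push_cast; omega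
    · left; push_cast; omega
  have hπ' : ∀ t, ∑ s, π s * Q s t = 0 := by
    intro t
    have h := congrFun hπ t
    simpa [Matrix.vecMul, dotProduct] using h
  set a : Fin (M+1) := ⟨m, by omega⟩ with ha
  set b : Fin (M+1) := ⟨m+1, by omega⟩ with hb
  have hab : a ≠ b := by
    intro h
    have := congrArg Fin.val h
    simp [ha, hb] at this
  set F : Finset (Fin (M+1) × Fin (l+1)) :=
    Finset.univ.filter (fun t => t.1.val ≤ m) with hF
  -- sum of balance equations over levels ≤ m
  have h0 : ∑ s, π s * ∑ t ∈ F, Q s t = 0 := by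
    calc ∑ s, π s * ∑ t ∈ F, Q s t
        = ∑ s, ∑ t ∈ F, π s * Q s t := by
          refine Finset.sum_congr rfl fun s _ => ?_
          exact Finset.mul_sum _ _ _
      _ = ∑ t ∈ F, ∑ s, π s * Q s t := Finset.sum_comm
      _ = 0 := Finset.sum_eq_zero fun t _ => hπ' t
  -- rewrite the inner sum as an iterated sum with an if
  have hFsum : ∀ s : Fin (M+1) × Fin (l+1), ∑ t ∈ F, Q s t =
      ∑ n' : Fin (M+1), if n'.val ≤ m then ∑ j, Q s (n', j) else 0 := by
    intro s
    rw [hF, Finset.sum_filter, Fintype.sum_prod_type]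
    refine Finset.sum_congr rfl fun n' _ => ?_
    split <;> simp
  -- complement form via row sums
  have hFsum' : ∀ s : Fin (M+1) × Fin (l+1), ∑ t ∈ F, Q s t =
      - ∑ n' : Fin (M+1), if n'.val ≤ m then 0 else ∑ j, Q s (n', j) := by
    intro s
    have hr : ∑ n' : Fin (M+1), ∑ j, Q s (n', j) = 0 := by
      rw [← Fintype.sum_prod_type]; exact hrow s
    have hsplit : (∑ n' : Fin (M+1), if n'.val ≤ m then ∑ j, Q s (n', j) else 0)
        + (∑ n' : Fin (M+1), if n'.val ≤ m then 0 else ∑ j, Q s (n', j))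
        = ∑ n' : Fin (M+1), ∑ j, Q s (n', j) := by
      rw [← Finset.sum_add_distrib]
      refine Finset.sum_congr rfl fun n' _ => ?_
      split <;> simp
    rw [hr] at hsplit
    rw [hFsum s]; linarith
  -- value of the inner sum at each level
  have hinner_a : ∀ i : Fin (l+1), ∑ t ∈ F, Q (a, i) t = - ∑ j, U m i j := by
    intro i
    rw [hFsum' (a, i)]
    congr 1
    rw [Finset.sum_eq_single b]
    · rw [if_neg (by simp [hb])]
      refine Finset.sum_congr rfl fun j _ => ?_
      rw [hU m hm i j]
    · intro n' _ hn'
      by_cases hle : n'.val ≤ m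
      · rw [if_pos hle]
      · rw [if_neg hle]
        refine Finset.sum_eq_zero fun j _ => ?_
        refine htri' a n' (Or.inl ?_) i j
        have : n'.val ≠ m + 1 := fun hc => hn' (Fin.ext (by simp [hb, hc]))
        simp [ha]; omega
    · intro h; exact absurd (Finset.mem_univ b) h
  have hinner_b : ∀ i : Fin (l+1), ∑ t ∈ F, Q (b, i) t = ∑ j, D (m+1) i j := by
    intro i
    rw [hFsum (b, i)]
    rw [Finset.sum_eq_single a]
    · rw [if_pos (by simp [ha])]
      refine Finset.sum_congr rfl fun j _ => ?_
      rw [hD (m+1) (by omega) (by omega) i j]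
      rfl
    · intro n' _ hn'
      by_cases hle : n'.val ≤ m
      · rw [if_pos hle]
        refine Finset.sum_eq_zero fun j _ => ?_
        refine htri' b n' (Or.inr ?_) i j
        have : n'.val ≠ m := fun hc => hn' (Fin.ext (by simp [ha, hc]))
        simp [hb]; omega
      · rw [if_neg hle]
    · intro h; exact absurd (Finset.mem_univ a) h
  have hinner_other : ∀ (n : Fin (M+1)), n ≠ a → n ≠ b →
      ∀ i : Fin (l+1), ∑ t ∈ F, Q (n, i) t = 0 := by
    intro n hna hnb i
    have hva : n.val ≠ m := fun hc => hna (Fin.ext (by simp [ha, hc]))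
    have hvb : n.val ≠ m + 1 := fun hc => hnb (Fin.ext (by simp [hb, hc]))
    by_cases hle : n.val ≤ m
    · rw [hFsum' (n, i)]
      rw [Finset.sum_eq_zero, neg_zero]
      intro n' _
      by_cases hle' : n'.val ≤ m
      · rw [if_pos hle']
      · rw [if_neg hle']
        refine Finset.sum_eq_zero fun j _ => ?_
        exact htri' n n' (Or.inl (by omega)) i j
    · rw [hFsum (n, i)]
      refine Finset.sum_eq_zero fun n' _ => ?_
      by_cases hle' : n'.val ≤ m
      · rw [if_pos hle']
        refine Finset.sum_eq_zero fun j _ => ?_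
        exact htri' n n' (Or.inr (by omega)) i j
      · rw [if_neg hle']
  -- main balance identity across the cut
  have main : ∑ i, π (b, i) * ∑ j, D (m+1) i j = ∑ i, π (a, i) * ∑ j, U m i j := by
    have h1 : ∑ s : Fin (M+1) × Fin (l+1), π s * ∑ t ∈ F, Q s t =
        (∑ i, π (a, i) * ∑ t ∈ F, Q (a, i) t)
          + ∑ i, π (b, i) * ∑ t ∈ F, Q (b, i) t := by
      rw [Fintype.sum_prod_type]
      rw [← Finset.sum_subset (Finset.subset_univ ({a, b} : Finset (Fin (M+1))))]
      · rw [Finset.sum_pair hab]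
      · intro n _ hn
        simp only [Finset.mem_insert, Finset.mem_singleton, not_or] at hn
        refine Finset.sum_eq_zero fun i _ => ?_
        rw [hinner_other n hn.1 hn.2 i, mul_zero]
    rw [h1] at h0
    have h2 : ∑ i, π (a, i) * ∑ t ∈ F, Q (a, i) t = - ∑ i, π (a, i) * ∑ j, U m i j := by
      rw [← Finset.sum_neg_distrib]
      refine Finset.sum_congr rfl fun i _ => ?_
      rw [hinner_a i]; ring
    have h3 : ∑ i, π (b, i) * ∑ t ∈ F, Q (b, i) t = ∑ i, π (b, i) * ∑ j, D (m+1) i j := by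
      refine Finset.sum_congr rfl fun i _ => ?_
      rw [hinner_b i]
    rw [h2, h3] at h0
    linarith
  -- conclude
  funext j
  show ∑ i, π (b, i) * D (m+1) i j = ∑ i, π (a, i) * Ut m i j
  by_cases hj : j = (0 : Fin (l+1))
  · subst hj
    have hDsum : ∀ i : Fin (l+1), ∑ k, D (m+1) i k = D (m+1) i 0 := by
      intro i
      rw [Finset.sum_eq_single (0 : Fin (l+1))]
      · intro k _ hk; exact hDES (m+1) (by omega) (by omega) i k hk
      · intro h; exact absurd (Finset.mem_univ _) h
    calc ∑ i, π (b, i) * D (m+1) i 0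
        = ∑ i, π (b, i) * ∑ k, D (m+1) i k := by
          refine Finset.sum_congr rfl fun i _ => ?_
          rw [hDsum i]
      _ = ∑ i, π (a, i) * ∑ k, U m i k := main
      _ = ∑ i, π (a, i) * Ut m i 0 := by
          refine Finset.sum_congr rfl fun i _ => ?_
          rw [hUt m hm i 0, if_pos rfl]
  · calc ∑ i, π (b, i) * D (m+1) i j
        = 0 := Finset.sum_eq_zero fun i _ => by
          rw [hDES (m+1) (by omega) (by omega) i j hj, mul_zero]
      _ = ∑ i, π (a, i) * Ut m i j := by
          symm
          refine Finset.sum_eq_zero fun i _ => ?_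
          rw [hUt m hm i j, if_neg hj, mul_zero]
end

section
/- Homogeneous down-block identity: R D = Ũ. -/
open Matrix

theorem stmt_12 (l : ℕ)
    (W U D : Matrix (Fin (l+1)) (Fin (l+1)) ℝ)
    (hrow : (D + W + U).mulVec (fun _ => (1:ℝ)) = 0)
    (hDES : ∀ (i j : Fin (l+1)), j ≠ 0 → D i j = 0)
    (Ut : Matrix (Fin (l+1)) (Fin (l+1)) ℝ)
    (hUt : Ut = Matrix.vecMulVec (U.mulVec (fun _ => (1:ℝ)))
        (fun j => if j = (0 : Fin (l+1)) then (1:ℝ) else 0))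
    (B : Matrix (Fin (l+1)) (Fin (l+1)) ℝ)
    (hB : B = W + Ut)
    (hBinv : IsUnit B)
    (R : Matrix (Fin (l+1)) (Fin (l+1)) ℝ)
    (hR : R = -(U * B⁻¹)) :
    R * D = Ut := by
  set E : Matrix (Fin (l+1)) (Fin (l+1)) ℝ :=
    Matrix.vecMulVec (fun _ => (1:ℝ)) (fun j => if j = (0 : Fin (l+1)) then (1:ℝ) else 0) with hE
  have hdet : IsUnit B.det := (Matrix.isUnit_iff_isUnit_det B).mp hBinv
  have hUtE : Ut = U * E := by
    subst hUt
    ext i j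
    simp [hE, Matrix.mul_apply, Matrix.vecMulVec_apply, Matrix.mulVec, dotProduct,
      mul_ite, Finset.sum_ite_eq']
  have hD : D = -(B * E) := by
    ext i j
    by_cases hj : j = (0 : Fin (l+1))
    · subst hj
      have h0 := congrFun hrow i
      simp [Matrix.mulVec, dotProduct, Matrix.add_apply] at h0
      have hDsum : ∑ k, D i k = D i 0 := by
        rw [Finset.sum_eq_single (0 : Fin (l+1))]
        · intro b _ hb; exact hDES i b hb
        · simp
      rw [Finset.sum_add_distrib, Finset.sum_add_distrib, hDsum] at h0
      have hrhs : (-(B * E)) i 0 = -(∑ k, W i k + ∑ k, U i k) := by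
        simp only [Matrix.neg_apply, Matrix.mul_apply, hE, Matrix.vecMulVec_apply, hB,
          Matrix.add_apply, hUt, Matrix.mulVec, dotProduct]
        simp [Finset.sum_add_distrib, mul_ite, Finset.sum_ite_eq']
      rw [hrhs]; linarith
    · rw [hDES i j hj]
      simp [Matrix.mul_apply, hE, Matrix.vecMulVec_apply, hj]
  rw [hR, hD, hUtE]
  rw [Matrix.neg_mul, Matrix.mul_neg, neg_neg, Matrix.mul_assoc, ← Matrix.mul_assoc B⁻¹,
    Matrix.nonsing_inv_mul B hdet, Matrix.one_mul]
end

section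
/- Homogeneous matrix-quadratic (Neuts) equation: the explicit rate matrix R = −U B^{−1} satisfies U + R W + R² D = 0. -/
/-!
Put `e = 1 δ₀`, an idempotent with `Ũ = U e`. Since `D` lives in column 0, `D = D e`, and the zero
row sums give `(D + W + U) e = 0`; together these say `D = -B e`. Substituting `W = B - U e` and
`D = -B e` yields the identity `U + R W + R² D = (U + R B) - R (U + R B) e`, which vanishes because `R B = -U`.
-/

open Matrix

theorem add_mul_add_mul_mul_eq_zero_of_isIdempotentElem {A : Type*} [Ring A] {U W D B R e : A}
    (he : IsIdempotentElem e) (hDe : D * e = D) (hrow : (D + W + U) * e = 0)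
    (hB : B = W + U * e) (hRB : R * B = -U) :
    U + R * W + R * R * D = 0 := by
  have hD : D = -(B * e) := by
    calc D = D * e := hDe.symm
      _ = (D + W + U) * e - (W * e + U * e) := by noncomm_ring
      _ = -(B * e) := by rw [hrow, hB, add_mul, mul_assoc, he.eq, zero_sub]
  have hW : W = B - U * e := by rw [hB, add_sub_cancel_right]
  calc U + R * W + R * R * D = (U + R * B) - R * (U + R * B) * e := by rw [hW, hD]; noncomm_ring
    _ = 0 := by rw [hRB, add_neg_cancel, mul_zero, zero_mul, sub_zero]

namespace Matrix

variable {n α : Type*} [Fintype n]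

theorem isIdempotentElem_vecMulVec [Semiring α] {u v : n → α} (hvu : v ⬝ᵥ u = 1) :
    IsIdempotentElem (vecMulVec u v) := by
  rw [IsIdempotentElem, vecMulVec_mul_vecMulVec, hvu, one_smul]

theorem mul_vecMulVec_one_single_eq_self [DecidableEq n] [Semiring α]
    {M : Matrix n n α} {j₀ : n} (hM : ∀ i j, j ≠ j₀ → M i j = 0) :
    M * vecMulVec 1 (Pi.single j₀ 1) = M := by
  ext i j
  have hrowsum : (M *ᵥ 1) i = M i j₀ := by
    simp only [mulVec, dotProduct, Pi.one_apply, mul_one]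
    exact Finset.sum_eq_single j₀ (fun k _ hk => hM i k hk) (by simp)
  rw [mul_vecMulVec, vecMulVec_apply, hrowsum]
  by_cases hj : j = j₀
  · rw [hj, Pi.single_eq_same, mul_one]
  · rw [Pi.single_eq_of_ne hj, mul_zero, hM i j hj]

end Matrix

theorem stmt_13 (l : ℕ)
    (W U D : Matrix (Fin (l+1)) (Fin (l+1)) ℝ)
    (hrow : (D + W + U).mulVec (fun _ => (1:ℝ)) = 0)
    (hDES : ∀ (i j : Fin (l+1)), j ≠ 0 → D i j = 0)
    (Ut : Matrix (Fin (l+1)) (Fin (l+1)) ℝ)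
    (hUt : Ut = Matrix.vecMulVec (U.mulVec (fun _ => (1:ℝ)))
        (fun j => if j = (0 : Fin (l+1)) then (1:ℝ) else 0))
    (B : Matrix (Fin (l+1)) (Fin (l+1)) ℝ)
    (hB : B = W + Ut)
    (hBinv : IsUnit B)
    (R : Matrix (Fin (l+1)) (Fin (l+1)) ℝ)
    (hR : R = -(U * B⁻¹)) :
    U + R * W + R * R * D = 0 := by
  have hδ : (fun j => if j = (0 : Fin (l+1)) then (1:ℝ) else 0) = Pi.single 0 1 := by
    ext j
    simp [Pi.single_apply]
  have hUe : Ut = U * vecMulVec 1 (Pi.single 0 1) := by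
    rw [hUt, hδ, mul_vecMulVec]
    rfl
  have hRB : R * B = -U := by
    rw [hR, neg_mul, Matrix.mul_assoc, nonsing_inv_mul B ((isUnit_iff_isUnit_det B).mp hBinv),
      Matrix.mul_one]
  refine add_mul_add_mul_mul_eq_zero_of_isIdempotentElem
    (isIdempotentElem_vecMulVec (by simp)) (mul_vecMulVec_one_single_eq_self hDES) ?_
    (hUe ▸ hB) hRB
  have hrow' : (D + W + U) *ᵥ 1 = 0 := hrow
  rw [mul_vecMulVec, hrow', zero_vecMulVec]
end
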